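/- arXiv:math/0410041 — 2 statements merged into one kernel-verified Lean document; each statement's English description precedes it below -/
import Mathlib

section
/- Let Γ be a group acting on a set X, and let G₀, G₁, ..., G_P be subgroups of Γ with G_i ∩ G_{i'} = G₀ for all distinct i, i' ∈ {1,...,P}. Suppose Θ₁, ..., Θ_P ⊆ X is a proper interactive P-tuple for G₁,...,G_P. Then the natural homomorphism from the amalgamated free product G₁ *_{G₀} G₂ *_{G₀} ⋯ *_{G₀} G_P to Γ (extending the inclusions G_i ↪ Γ) is injective. -/
/-!
Write an element of the amalgam in normal form `h g₁ ⋯ gₙ` with `h ∈ G₀` and letters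
`gₖ ∈ G iₖ \ G₀`, consecutive indices distinct. Absorbing `h` into `g₁`, condition (4) shows,
from the right, that the image in `Γ` maps `Θ j` into `Θ i₁` for every `j ≠ iₙ`, and (5) that
the image avoids `θ i₁`. So if `i₁ ≠ iₙ` the image moves `θ i₁`; if `i₁ = iₙ` and `n ≥ 2` it
maps the nonempty `Θ i₂` into the disjoint `Θ i₁`; and if `n = 1` it lies outside `G₀`.
Either way it is not `1`.
-/

open Function Monoid Monoid.PushoutI Monoid.PushoutI.NormalWord

theorem Subgroup.IsComplement.eq_one_of_mem_of_mem {G : Type*} [Group G] {S T : Set G}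
    (hST : Subgroup.IsComplement S T) (hS1 : 1 ∈ S) (hT1 : 1 ∈ T) {g : G}
    (hgS : g ∈ S) (hgT : g ∈ T) : g = 1 := by
  have : ((⟨g, hgS⟩, ⟨1, hT1⟩) : S × T) = (⟨1, hS1⟩, ⟨g, hgT⟩) :=
    hST.1 (by simp)
  simpa using congrArg (fun x => (x.1 : G)) this

namespace Monoid.PushoutI

variable {ι : Type*} {G : ι → Type*} {H K : Type*} [∀ i, Group (G i)] [Group H] [Group K]
  {φ : ∀ i, H →* G i}

theorem NormalWord.reduced {d : Transversal φ} (w : NormalWord d) : Reduced φ w.toWord := by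
  rintro ⟨i, g⟩ hg hgφ
  exact w.ne_one _ hg <| (d.compl i).eq_one_of_mem_of_mem (one_mem _) (d.one_mem i)
    hgφ (w.normalized i _ hg)

theorem lift_ofCoprodI (f : ∀ i, G i →* K) (k : H →* K)
    (hf : ∀ i, (f i).comp (φ i) = k) (x : CoprodI G) :
    lift f k hf (ofCoprodI x) = CoprodI.lift f x := by
  induction x using CoprodI.induction_on with
  | one => simp
  | of g => simp [ofCoprodI_of]
  | mul x y hx hy => simp [hx, hy]

theorem lift_injective_of_reduced (hφ : ∀ i, Injective (φ i)) (f : ∀ i, G i →* K)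
    (k : H →* K) (hf : ∀ i, (f i).comp (φ i) = k) (hk : Injective k)
    (hred : ∀ w : CoprodI.Word G, Reduced φ w → w ≠ .empty →
      ∀ h : H, k h * CoprodI.lift f w.prod ≠ 1) :
    Injective (lift f k hf) := by
  classical
  obtain ⟨d⟩ := transversal_nonempty φ hφ
  rw [injective_iff_map_eq_one]
  intro x hx
  set w : NormalWord d := x • NormalWord.empty
  have hwx : w.prod = x := by simp [w]
  rw [← hwx, NormalWord.prod, map_mul, lift_base, lift_ofCoprodI] at hx
  by_cases hw : w.toWord = .empty
  · rw [hw, CoprodI.Word.prod_empty, map_one, mul_one, ← map_one k] at hx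
    rw [← hwx, NormalWord.prod, hk hx, hw]
    simp
  · exact absurd hx (hred _ w.reduced hw _)

end Monoid.PushoutI

section PingPong

variable {Γ X ι : Type*} [Group Γ] [MulAction Γ X] {G₀ : Subgroup Γ} {G : ι → Subgroup Γ}
  {Θ : ι → Set X} {θ : ι → X}

theorem pingpong_mul_prod_smul_mem
    (hping : ∀ i j, i ≠ j → ∀ g ∈ G i, g ∉ G₀ → ∀ x ∈ Θ j, g • x ∈ Θ i \ {θ i}) :
    ∀ (t : List (Σ i, G i)) {i j : ι} {g : Γ}, g ∈ G i → g ∉ G₀ →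
      (∀ q ∈ t, (q.2 : Γ) ∉ G₀) → (i :: t.map Sigma.fst ++ [j]).IsChain (· ≠ ·) →
      ∀ x ∈ Θ j, (g * (t.map fun q => (q.2 : Γ)).prod) • x ∈ Θ i \ {θ i}
  | [], i, j, g, hg, hg₀, _, hij, x, hx => by
    simpa using hping i j (by simpa using hij) g hg hg₀ x hx
  | q :: t, i, _, g, hg, hg₀, ht, hchain, x, hx => by
    simp only [List.map_cons, List.cons_append, List.isChain_cons_cons] at hchain
    have hqx := pingpong_mul_prod_smul_mem hping t q.2.2 (ht q List.mem_cons_self)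
      (fun r hr => ht r (List.mem_cons_of_mem _ hr)) hchain.2 x hx
    rw [List.map_cons, List.prod_cons, mul_smul]
    exact hping i q.1 hchain.1 g hg hg₀ _ hqx.1

theorem pingpong_mul_prod_ne_one (hΘ : ∀ i, (Θ i).Nonempty) (hdisj : Pairwise (Disjoint on Θ))
    (hθ : ∀ i, θ i ∈ Θ i)
    (hping : ∀ i j, i ≠ j → ∀ g ∈ G i, g ∉ G₀ → ∀ x ∈ Θ j, g • x ∈ Θ i \ {θ i})
    {i : ι} {g : Γ} (hg : g ∈ G i) (hg₀ : g ∉ G₀) (t : List (Σ i, G i))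
    (hchain : (i :: t.map Sigma.fst).IsChain (· ≠ ·)) (ht : ∀ q ∈ t, (q.2 : Γ) ∉ G₀) :
    g * (t.map fun q => (q.2 : Γ)).prod ≠ 1 := by
  intro hprod
  have hfix : ∀ j, (t.map Sigma.fst).getLastD i ≠ j → ∀ x ∈ Θ j, x ∈ Θ i \ {θ i} := by
    intro j hj x hx
    have := pingpong_mul_prod_smul_mem hping t hg hg₀ ht
      (hchain.append (List.isChain_singleton j) (by simpa [List.getLast?_cons] using hj)) x hx
    rwa [hprod, one_smul] at this
  by_cases hlast : (t.map Sigma.fst).getLastD i = i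
  · rcases t with _ | ⟨q, t⟩
    · have hg1 : g = 1 := by simpa using hprod
      exact hg₀ (hg1 ▸ G₀.one_mem)
    · have hiq : i ≠ q.1 := (List.isChain_cons_cons.1 hchain).1
      obtain ⟨x, hx⟩ := hΘ q.1
      exact (hdisj hiq).ne_of_mem (hfix q.1 (hlast ▸ hiq) x hx).1 hx rfl
  · exact (hfix i hlast (θ i) (hθ i)).2 rfl

end PingPong

theorem pingpong_amalgam_injective_general
    {Γ X ι : Type} [Group Γ] [MulAction Γ X]
    (G₀ : Subgroup Γ) (G : ι → Subgroup Γ)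
    (hle : ∀ i, G₀ ≤ G i)
    (Θ : ι → Set X)
    (h1 : ∀ i, (Θ i).Nonempty)
    (h2 : ∀ i i', i ≠ i' → Θ i ∩ Θ i' = ∅)
    (h4 : ∀ i i', i ≠ i' → ∀ g, g ∈ G i → g ∉ G₀ → ∀ x ∈ Θ i', g • x ∈ Θ i)
    (h5 : ∀ i, ∃ θi ∈ Θ i, ∀ g, g ∈ G i → g ∉ G₀ →
      ∀ i', i' ≠ i → ∀ x ∈ Θ i', g • x ≠ θi) :
    Function.Injective
      (Monoid.PushoutI.lift (φ := fun i => Subgroup.inclusion (hle i))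
        (fun i => (G i).subtype) G₀.subtype
        (fun i => MonoidHom.ext fun x => rfl)) := by
  choose θ hθ hθ_notMem using h5
  have hping : ∀ i j, i ≠ j → ∀ g ∈ G i, g ∉ G₀ → ∀ x ∈ Θ j, g • x ∈ Θ i \ {θ i} :=
    fun i j hij g hg hg₀ x hx => ⟨h4 i j hij g hg hg₀ x hx, hθ_notMem i g hg hg₀ j hij.symm x hx⟩
  refine lift_injective_of_reduced (fun i => Subgroup.inclusion_injective _) _ _ _
    G₀.subtype_injective fun w hw hne ⟨h, hh⟩ => ?_
  obtain ⟨p, t, hpt⟩ := List.exists_cons_of_ne_nil fun hnil => hne (CoprodI.Word.ext hnil)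
  have hw₀ : ∀ q ∈ w.toList, (q.2 : Γ) ∉ G₀ := fun q hq hq₀ =>
    hw q hq (by simpa [Subgroup.inclusion_range, Subgroup.mem_subgroupOf] using hq₀)
  have hchain := (List.isChain_map Sigma.fst).2 w.chain_ne
  rw [hpt] at hw₀ hchain
  have hp : h * p.2 ∈ G p.1 := mul_mem (hle _ hh) p.2.2
  have hp₀ : h * p.2 ∉ G₀ := fun h₀ =>
    hw₀ p List.mem_cons_self ((G₀.mul_mem_cancel_left hh).1 h₀)
  have hdisj : Pairwise (Disjoint on Θ) := fun i j hij =>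
    Set.disjoint_iff_inter_eq_empty.2 (h2 i j hij)
  have := pingpong_mul_prod_ne_one h1 hdisj hθ hping hp hp₀ t hchain
    (fun q hq => hw₀ q (List.mem_cons_of_mem _ hq))
  simpa [CoprodI.Word.prod, hpt, map_list_prod, Function.comp_def, mul_assoc] using this

/-- **Ping-pong for amalgamated free products (Proposition 3 of Leininger–Reid).**
Let `Γ` be a group acting on a set `X`, and `G₀, G i (i : ι)` subgroups of `Γ` with
`G i ⊓ G i' = G₀` for all distinct `i, i'`.  Suppose the sets `Θ i ⊆ X` form a proper
interactive tuple for the `G i`: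
(1) each `Θ i` is nonempty; (2) the `Θ i` are pairwise disjoint; (3) `G₀` leaves each `Θ i`
invariant; (4) every `φ ∈ G i \ G₀` maps `Θ i'` into `Θ i` for `i' ≠ i`; (5) each `Θ i`
contains a point `θᵢ` not in `φ (Θ i')` for any `φ ∈ G i \ G₀`, `i' ≠ i`.
Then the natural homomorphism from the amalgamated free product of the `G i` over `G₀`
to `Γ` (extending the inclusions) is injective. -/
theorem pingpong_amalgam_injective
    {Γ X ι : Type} [Group Γ] [MulAction Γ X]
    (G₀ : Subgroup Γ) (G : ι → Subgroup Γ)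
    (hle : ∀ i, G₀ ≤ G i)
    (hinter : ∀ i i', i ≠ i' → G i ⊓ G i' = G₀)
    (Θ : ι → Set X)
    (h1 : ∀ i, (Θ i).Nonempty)
    (h2 : ∀ i i', i ≠ i' → Θ i ∩ Θ i' = ∅)
    (h3 : ∀ i, ∀ g ∈ G₀, ∀ x ∈ Θ i, g • x ∈ Θ i)
    (h4 : ∀ i i', i ≠ i' → ∀ g, g ∈ G i → g ∉ G₀ → ∀ x ∈ Θ i', g • x ∈ Θ i)
    (h5 : ∀ i, ∃ θi ∈ Θ i, ∀ g, g ∈ G i → g ∉ G₀ →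
      ∀ i', i' ≠ i → ∀ x ∈ Θ i', g • x ≠ θi) :
    Function.Injective
      (Monoid.PushoutI.lift (φ := fun i => Subgroup.inclusion (hle i))
        (fun i => (G i).subtype) G₀.subtype
        (fun i => MonoidHom.ext fun x => rfl)) :=
  pingpong_amalgam_injective_general G₀ G hle Θ h1 h2 h4 h5
end

section
/- Let G₁, G₂ ≤ PSL₂(ℝ) act on ℂ, let G₀ = ⟨z ↦ z+1⟩ ≤ G₁ ∩ G₂, and suppose for every φ ∈ G_i \ G₀ (i = 1,2) one has φ(H) ⊆ Θ, where H = {|Im z| > 1} and Θ = {|Im z| ≤ 1}. Let h be the translation z ↦ z + μ with Im μ ≠ 0, and let k be such that h^k(Θ) ⊆ H. Then Θ₁ = Θ and Θ₂ = h^k(Θ) form a proper interactive pair for G₁ and h^k G₂ h^{−k}, and hence G₁ *_{G₀} h^k G₂ h^{−k} embeds into PSL₂(ℂ). -/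
/-!
Elements of `G₀ = ⟨t⟩` are real translations, so they preserve the strip `Θ = {|Im z| ≤ 1}` and,
commuting with `h`, also its translate `hᵏΘ`. The hypothesis `hᵏΘ ⊆ H` forces `|k Im μ| > 2`, so
both `hᵏΘ` and `h⁻ᵏΘ` lie in `H`. Hence `G₁ \ G₀` maps `hᵏΘ` into `Θ`, and, conjugating by `hᵏ`,
`hᵏG₂h⁻ᵏ \ G₀` maps `Θ` into `hᵏΘ`. A point of `Θ` missed by `G₁ \ G₀` is `g₀(-kμ)` for any
`g₀ ∈ G₁ \ G₀`, and symmetrically on the other side.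

The embedding is ping-pong on normal forms of the amalgamated product: a nonempty reduced word,
applied to the distinguished point of the set opposite to its last letter, lands in the set of its
first letter but off that set's distinguished point, so it does not act trivially.
-/

open Pointwise

namespace Monoid.PushoutI.NormalWord

variable {ι H : Type*} {G : ι → Type*} [Group H] [∀ i, Group (G i)] {φ : ∀ i, H →* G i}
  {d : Transversal φ}

theorem notMem_range_of_mem_toList (w : NormalWord d) {i : ι} {g : G i}
    (hg : ⟨i, g⟩ ∈ w.toList) : g ∉ (φ i).range := by
  intro hrange
  have hfst := (d.compl i).equiv_fst_eq_self_of_mem_of_one_mem (d.one_mem i) hrange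
  rw [(d.compl i).equiv_fst_eq_one_of_mem_of_one_mem (one_mem _) (w.normalized i g hg)] at hfst
  exact w.ne_one _ hg (congrArg Subtype.val hfst).symm

end Monoid.PushoutI.NormalWord

section PingPong

variable {Γ X : Type*} [Group Γ] [MulAction Γ X]

def ProperlyMapsTo (G₀ G : Subgroup Γ) (Y Θ : Set X) : Prop :=
  (∀ g, g ∈ G → g ∉ G₀ → ∀ x ∈ Y, g • x ∈ Θ) ∧
    ∃ θ ∈ Θ, ∀ g, g ∈ G → g ∉ G₀ → ∀ x ∈ Y, g • x ≠ θ

theorem ProperlyMapsTo.of_mapsTo {G₀ G : Subgroup Γ} {Y K Θ : Set X}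
    (hmaps : ∀ g, g ∈ G → g ∉ G₀ → ∀ x ∈ K, g • x ∈ Θ) (hYK : Y ⊆ K) (hΘ : Θ.Nonempty)
    {x₀ : X} (hx₀K : x₀ ∈ K) (hx₀Θ : x₀ ∉ Θ) (hx₀Y : ∀ g ∈ G₀, ∀ y ∈ Y, g • y ≠ x₀) :
    ProperlyMapsTo G₀ G Y Θ := by
  refine ⟨fun g hg hg₀ x hx ↦ hmaps g hg hg₀ x (hYK hx), ?_⟩
  by_cases hG : ∃ g₀, g₀ ∈ G ∧ g₀ ∉ G₀
  · obtain ⟨g₀, hg₀, hg₀'⟩ := hG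
    refine ⟨g₀ • x₀, hmaps g₀ hg₀ hg₀' x₀ hx₀K, fun g hg hg' y hy hgy ↦ ?_⟩
    -- `g₀⁻¹ * g` would send `y` to `x₀`, which neither `G₀` nor `G \ G₀` can do.
    have hy₀ : (g₀⁻¹ * g) • y = x₀ := by rw [mul_smul, hgy, inv_smul_smul]
    by_cases h : g₀⁻¹ * g ∈ G₀
    · exact hx₀Y _ h y hy hy₀
    · exact hx₀Θ (hy₀ ▸ hmaps _ (mul_mem (inv_mem hg₀) hg) h y (hYK hy))
  · push Not at hG
    obtain ⟨θ, hθ⟩ := hΘ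
    exact ⟨θ, hθ, fun g hg hg' ↦ (hg' (hG g hg)).elim⟩

theorem ProperlyMapsTo.map_conj {G₀ G : Subgroup Γ} {Y Θ : Set X} {a : Γ}
    (h : ProperlyMapsTo G₀ G (a⁻¹ • Y) Θ) (ha : ∀ g ∈ G₀, a * g * a⁻¹ ∈ G₀) :
    ProperlyMapsTo G₀ (G.map (MulAut.conj a).toMonoidHom) Y (a • Θ) := by
  have hconj : ∀ g, g ∈ G.map (MulAut.conj a).toMonoidHom → g ∉ G₀ →
      ∃ g' ∈ G, g' ∉ G₀ ∧ ∀ x : X, g • x = a • g' • a⁻¹ • x := by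
    rintro _ ⟨g', hg', rfl⟩ hg₀
    exact ⟨g', hg', fun h ↦ hg₀ (ha g' h), fun x ↦ by simp [mul_smul]⟩
  obtain ⟨hmaps, θ, hθ, hne⟩ := h
  refine ⟨fun g hg hg₀ x hx ↦ ?_, a • θ, Set.smul_mem_smul_set hθ, fun g hg hg₀ x hx hgx ↦ ?_⟩ <;>
    obtain ⟨g', hg', hg'₀, hg⟩ := hconj g hg hg₀
  · rw [hg]
    exact Set.smul_mem_smul_set (hmaps g' hg' hg'₀ _ (Set.smul_mem_smul_set hx))
  · rw [hg] at hgx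
    exact hne g' hg' hg'₀ _ (Set.smul_mem_smul_set hx) (smul_left_cancel a hgx)

structure ProperInteractivePair (G₀ G₁ G₂ : Subgroup Γ) (Θ₁ Θ₂ : Set X) : Prop where
  nonempty_left : Θ₁.Nonempty
  nonempty_right : Θ₂.Nonempty
  inter_eq_empty : Θ₁ ∩ Θ₂ = ∅
  smul_mem_left : ∀ g ∈ G₀, ∀ x ∈ Θ₁, g • x ∈ Θ₁
  smul_mem_right : ∀ g ∈ G₀, ∀ x ∈ Θ₂, g • x ∈ Θ₂
  properlyMapsTo_left : ProperlyMapsTo G₀ G₁ Θ₂ Θ₁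
  properlyMapsTo_right : ProperlyMapsTo G₀ G₂ Θ₁ Θ₂

variable {G₀ : Subgroup Γ} {G : Bool → Subgroup Γ} {Θ : Bool → Set X}

/-- The factor `a ∈ G₀` absorbs the head of a normal word into its first letter. -/
theorem prod_smul_mem_diff_of_isChain {θ : Bool → X} (hle : ∀ b, G₀ ≤ G b)
    (hmaps : ∀ b, ∀ g ∈ G b, g ∉ G₀ → ∀ x ∈ Θ (!b), g • x ∈ Θ b)
    (hne : ∀ b, ∀ g ∈ G b, g ∉ G₀ → ∀ x ∈ Θ (!b), g • x ≠ θ b)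
    (l : List (Σ b, G b)) (p : Σ b, G b) (hl : ∀ q ∈ p :: l, (q.2 : Γ) ∉ G₀)
    (hchain : (p :: l).IsChain (fun q r ↦ q.1 ≠ r.1)) {a : Γ} (ha : a ∈ G₀) :
    ∀ x ∈ Θ (!((p :: l).getLast (List.cons_ne_nil p l)).1),
      (a * ((p :: l).map fun q ↦ (q.2 : Γ)).prod) • x ∈ Θ p.1 \ {θ p.1} := by
  have step : ∀ (p : Σ b, G b) {a : Γ}, a ∈ G₀ → (p.2 : Γ) ∉ G₀ →
      ∀ x ∈ Θ (!p.1), (a * p.2) • x ∈ Θ p.1 \ {θ p.1} := fun p a ha hp x hx ↦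
    have hap : a * p.2 ∉ G₀ := fun h ↦ hp (by simpa using mul_mem (inv_mem ha) h)
    ⟨hmaps p.1 _ (mul_mem (hle p.1 ha) p.2.2) hap x hx,
      hne p.1 _ (mul_mem (hle p.1 ha) p.2.2) hap x hx⟩
  induction l generalizing p a with
  | nil => simpa using step p ha (hl p List.mem_cons_self)
  | cons q l ih =>
    intro x hx
    obtain ⟨hpq, hchain⟩ := List.isChain_cons_cons.1 hchain
    have hq : q.1 = !p.1 := by revert hpq; cases p.1 <;> cases q.1 <;> simp
    have hqx := ih q (fun r hr ↦ hl r (List.mem_cons_of_mem _ hr)) hchain (one_mem _) x hx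
    rw [one_mul, hq] at hqx
    rw [List.map_cons, List.prod_cons, ← mul_assoc, mul_smul]
    exact step p ha (hl p List.mem_cons_self) _ hqx.1

theorem notMem_diff_singleton_of_disjoint {θ : Bool → X} (hdisj : Disjoint (Θ true) (Θ false))
    (hθ : ∀ b, θ b ∈ Θ b) (b c : Bool) : θ (!c) ∉ Θ b \ {θ b} := by
  rintro ⟨hmem, hne⟩
  rcases Bool.eq_or_eq_not b c with rfl | rfl
  · cases b
    exacts [Set.disjoint_left.1 hdisj (hθ _) hmem, Set.disjoint_left.1 hdisj hmem (hθ _)]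
  · exact hne rfl

open Monoid.PushoutI in
theorem pushoutI_lift_injective_of_pingPong (hle : ∀ b, G₀ ≤ G b)
    (hdisj : Disjoint (Θ true) (Θ false)) (hpp : ∀ b, ProperlyMapsTo G₀ (G b) (Θ !b) (Θ b)) :
    Function.Injective (lift (φ := fun b ↦ Subgroup.inclusion (hle b))
      (fun b ↦ (G b).subtype) G₀.subtype (fun _ ↦ MonoidHom.ext fun _ ↦ rfl)) := by
  classical
  choose θ hθ hne using fun b ↦ (hpp b).2
  set L := lift (φ := fun b ↦ Subgroup.inclusion (hle b)) (fun b ↦ (G b).subtype) G₀.subtype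
    (fun _ ↦ MonoidHom.ext fun _ ↦ rfl)
  rw [injective_iff_map_eq_one]
  intro g hg
  obtain ⟨d⟩ := NormalWord.transversal_nonempty _ fun b ↦ Subgroup.inclusion_injective (hle b)
  set w := NormalWord.equiv (d := d) g
  have hg_eq : g = base _ w.head * ofCoprodI w.toWord.prod :=
    (NormalWord.equiv.symm_apply_apply g).symm
  have hletters : ∀ q ∈ w.toList, (q.2 : Γ) ∉ G₀ := fun ⟨_, x⟩ hq hx ↦
    w.notMem_range_of_mem_toList hq ⟨⟨x, hx⟩, rfl⟩
  have hLg : L g = w.head * (w.toList.map fun q ↦ (q.2 : Γ)).prod := by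
    simp [hg_eq, L, Monoid.CoprodI.Word.prod, map_list_prod, Function.comp_def]
  rcases hw : w.toList with _ | ⟨p, l⟩
  · have hhead : w.head = 1 := OneMemClass.coe_eq_one.1 (by simpa [hLg, hw] using hg)
    simp [hg_eq, hhead, Monoid.CoprodI.Word.prod, hw]
  · have hchain := w.chain_ne
    rw [hw] at hchain
    set c := ((p :: l).getLast (List.cons_ne_nil p l)).1
    have hping := prod_smul_mem_diff_of_isChain hle (fun b ↦ (hpp b).1) hne l p
      (hw ▸ hletters) hchain w.head.2 (θ !c) (hθ _)
    rw [← hw, ← hLg, hg, one_smul] at hping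
    exact (notMem_diff_singleton_of_disjoint hdisj hθ p.1 c hping).elim

theorem ProperInteractivePair.injective_lift {G₀ G₁ G₂ : Subgroup Γ} {Θ₁ Θ₂ : Set X}
    (P : ProperInteractivePair G₀ G₁ G₂ Θ₁ Θ₂) (hle : ∀ b : Bool, G₀ ≤ if b then G₁ else G₂) :
    Function.Injective (Monoid.PushoutI.lift (φ := fun b ↦ Subgroup.inclusion (hle b))
      (fun b ↦ (if b then G₁ else G₂ : Subgroup Γ).subtype) G₀.subtype
      (fun _ ↦ MonoidHom.ext fun _ ↦ rfl)) :=
  pushoutI_lift_injective_of_pingPong (Θ := fun b ↦ if b then Θ₁ else Θ₂) hle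
    (by simpa [Set.disjoint_iff_inter_eq_empty] using P.inter_eq_empty)
    (by rintro (_ | _); exacts [P.properlyMapsTo_right, P.properlyMapsTo_left])

end PingPong

section Strip

variable {Γ : Type*} [Group Γ] [MulAction Γ ℂ]

/-- The set `Θ`; its complement `{z | 1 < |z.im|}` is `H`. -/
def strip : Set ℂ := {z | |z.im| ≤ 1}

theorem zpow_smul_eq_add {a : Γ} {w : ℂ} (ha : ∀ z, a • z = z + w) (n : ℤ) (z : ℂ) :
    a ^ n • z = z + n * w := by
  have ha' : ∀ z, a⁻¹ • z = z - w := fun z ↦ by rw [inv_smul_eq_iff, ha]; ring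
  induction n using Int.induction_on generalizing z with
  | zero => simp
  | succ n ih => rw [zpow_add_one, mul_smul, ha, ih]; push_cast; ring
  | pred n ih => rw [zpow_sub_one, mul_smul, ha', ih]; push_cast; ring

theorem im_smul_of_mem_zpowers {a : Γ} {w : ℂ} (ha : ∀ z, a • z = z + w) (hw : w.im = 0) :
    ∀ g ∈ Subgroup.zpowers a, ∀ z : ℂ, (g • z).im = z.im := by
  rintro _ ⟨n, rfl⟩ z
  simp [zpow_smul_eq_add ha, hw]

theorem two_lt_abs_im_of_forall_mem_strip {w : ℂ} (hw : ∀ z ∈ strip, 1 < |(z + w).im|) :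
    2 < |w.im| := by
  have h₁ := hw Complex.I (by simp [strip])
  have h₂ := hw (-Complex.I) (by simp [strip])
  simp only [Complex.add_im, Complex.I_im, Complex.neg_im] at h₁ h₂
  rcases abs_cases (1 + w.im) with ⟨e₁, _⟩ | ⟨e₁, _⟩ <;>
    rcases abs_cases (-1 + w.im) with ⟨e₂, _⟩ | ⟨e₂, _⟩ <;>
    rcases abs_cases w.im with ⟨e, _⟩ | ⟨e, _⟩ <;> linarith

theorem smul_strip_subset {a : Γ} {w : ℂ} (ha : ∀ z, a • z = z + w) (hw : 2 < |w.im|) :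
    a • strip ⊆ {z : ℂ | 1 < |z.im|} := by
  rintro _ ⟨z, hz, rfl⟩
  have := abs_sub_abs_le_abs_sub w.im (-z.im)
  simp only [strip, Set.mem_ofPred_eq, ha, Complex.add_im] at hz ⊢
  rw [abs_neg, sub_neg_eq_add, add_comm] at this
  linarith

theorem properlyMapsTo_strip {G₀ G : Subgroup Γ} (hG₀ : ∀ g ∈ G₀, ∀ z : ℂ, (g • z).im = z.im)
    (hmap : ∀ g, g ∈ G → g ∉ G₀ → ∀ z : ℂ, 1 < |z.im| → |(g • z).im| ≤ 1)
    {a : Γ} {w : ℂ} (ha : ∀ z, a • z = z + w) (hw : 2 < |w.im|) :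
    ProperlyMapsTo G₀ G (a • strip) strip := by
  -- `-w` lies in `H` at height `-Im w`, out of reach of the `G₀`-translates of `a • strip`,
  -- which stay within height `1` of `Im w`.
  refine .of_mapsTo (K := {z : ℂ | 1 < |z.im|}) (x₀ := -w)
    (fun g hg hg₀ x hx ↦ hmap g hg hg₀ x hx) (smul_strip_subset ha hw)
    ⟨0, by simp [strip]⟩ (by simp; linarith) (by simp [strip]; linarith) ?_
  rintro g hg _ ⟨z, hz, rfl⟩ h
  have him := congrArg Complex.im h
  dsimp only at him
  rw [hG₀ g hg, ha] at him
  simp only [strip, Set.mem_ofPred_eq, Complex.add_im, Complex.neg_im] at hz him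
  rcases abs_cases z.im with ⟨_, _⟩ | ⟨_, _⟩ <;>
    rcases abs_cases w.im with ⟨_, _⟩ | ⟨_, _⟩ <;> linarith

theorem properInteractivePair_strip {G₀ G₁ G₂ : Subgroup Γ}
    (hG₀ : ∀ g ∈ G₀, ∀ z : ℂ, (g • z).im = z.im)
    (hmap₁ : ∀ g, g ∈ G₁ → g ∉ G₀ → ∀ z : ℂ, 1 < |z.im| → |(g • z).im| ≤ 1)
    (hmap₂ : ∀ g, g ∈ G₂ → g ∉ G₀ → ∀ z : ℂ, 1 < |z.im| → |(g • z).im| ≤ 1)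
    {a : Γ} {w : ℂ} (ha : ∀ z, a • z = z + w) (hw : 2 < |w.im|)
    (hcomm : ∀ g ∈ G₀, Commute a g) :
    ProperInteractivePair G₀ G₁ (G₂.map (MulAut.conj a).toMonoidHom) strip (a • strip) where
  nonempty_left := ⟨0, by simp [strip]⟩
  nonempty_right := Set.Nonempty.smul_set ⟨0, by simp [strip]⟩
  inter_eq_empty := by
    refine Set.eq_empty_of_forall_notMem fun z ⟨hz₁, hz₂⟩ ↦ ?_
    have := smul_strip_subset ha hw hz₂
    simp only [strip, Set.mem_ofPred_eq] at hz₁ this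
    linarith
  smul_mem_left g hg x hx := by simpa [strip, hG₀ g hg] using hx
  smul_mem_right := by
    rintro g hg _ ⟨z, hz, rfl⟩
    rw [← mul_smul, ← (hcomm g hg).eq, mul_smul]
    exact Set.smul_mem_smul_set (by simpa [strip, hG₀ g hg] using hz)
  properlyMapsTo_left := properlyMapsTo_strip hG₀ hmap₁ ha hw
  properlyMapsTo_right := by
    refine (properlyMapsTo_strip hG₀ hmap₂ (w := -w) (fun z ↦ ?_) (by simpa using hw)).map_conj
      fun g hg ↦ ?_
    · rw [inv_smul_eq_iff, ha]; ring
    · rwa [(hcomm g hg).eq, mul_inv_cancel_right]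

end Strip

theorem klein_maskit_example_general
    {Γ : Type} [Group Γ] [MulAction Γ ℂ]
    (G₁ G₂ : Subgroup Γ) (t h : Γ)
    (ht : ∀ z : ℂ, t • z = z + 1)
    (μ : ℂ) (hh : ∀ z : ℂ, h • z = z + μ)
    (hmap₁ : ∀ g, g ∈ G₁ → g ∉ Subgroup.zpowers t →
      ∀ z : ℂ, 1 < |z.im| → |(g • z).im| ≤ 1)
    (hmap₂ : ∀ g, g ∈ G₂ → g ∉ Subgroup.zpowers t →
      ∀ z : ℂ, 1 < |z.im| → |(g • z).im| ≤ 1)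
    (hcomm : Commute h t)
    (k : ℕ) (hk : ∀ z : ℂ, |z.im| ≤ 1 → 1 < |((h ^ k) • z).im|) :
    -- the conjugated second factor and the two ping-pong sets
    (let G₀ : Subgroup Γ := Subgroup.zpowers t
     let G₂' : Subgroup Γ := Subgroup.map (MulAut.conj (h ^ k)).toMonoidHom G₂
     let Θ₁ : Set ℂ := {z : ℂ | |z.im| ≤ 1}
     let Θ₂ : Set ℂ := (h ^ k) • ({z : ℂ | |z.im| ≤ 1} : Set ℂ)
     -- proper interactive pair
     (Θ₁.Nonempty ∧ Θ₂.Nonempty ∧ Θ₁ ∩ Θ₂ = ∅ ∧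
      (∀ g ∈ G₀, ∀ x ∈ Θ₁, g • x ∈ Θ₁) ∧
      (∀ g ∈ G₀, ∀ x ∈ Θ₂, g • x ∈ Θ₂) ∧
      (∀ g, g ∈ G₁ → g ∉ G₀ → ∀ x ∈ Θ₂, g • x ∈ Θ₁) ∧
      (∀ g, g ∈ G₂' → g ∉ G₀ → ∀ x ∈ Θ₁, g • x ∈ Θ₂) ∧
      (∃ θ₁ ∈ Θ₁, ∀ g, g ∈ G₁ → g ∉ G₀ → ∀ x ∈ Θ₂, g • x ≠ θ₁) ∧
      (∃ θ₂ ∈ Θ₂, ∀ g, g ∈ G₂' → g ∉ G₀ → ∀ x ∈ Θ₁, g • x ≠ θ₂)) ∧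
     -- hence the amalgamated product embeds in Γ
     (∀ hle : ∀ b : Bool, G₀ ≤ (if b then G₁ else G₂'),
        Function.Injective
          (Monoid.PushoutI.lift (φ := fun b : Bool => Subgroup.inclusion (hle b))
            (fun b => (if b then G₁ else G₂' : Subgroup Γ).subtype) G₀.subtype
            (fun b => MonoidHom.ext fun x => rfl)))) := by
  intro G₀ G₂' Θ₁ Θ₂
  have hA : ∀ z : ℂ, (h ^ k) • z = z + k * μ := by
    simpa using zpow_smul_eq_add hh k
  have pair : ProperInteractivePair G₀ G₁ G₂' strip ((h ^ k) • strip) :=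
    properInteractivePair_strip (im_smul_of_mem_zpowers ht Complex.one_im) hmap₁ hmap₂ hA
      (two_lt_abs_im_of_forall_mem_strip fun z hz ↦ hA z ▸ hk z hz)
      (by rintro _ ⟨m, rfl⟩; exact (hcomm.pow_left k).zpow_right m)
  exact ⟨⟨pair.nonempty_left, pair.nonempty_right, pair.inter_eq_empty, pair.smul_mem_left,
    pair.smul_mem_right, pair.properlyMapsTo_left.1, pair.properlyMapsTo_right.1,
    pair.properlyMapsTo_left.2, pair.properlyMapsTo_right.2⟩, pair.injective_lift⟩

/-- **The Klein–Maskit combination example (§2.3 of Leininger–Reid).**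
Let `G₁, G₂ ≤ PSL₂(ℝ)` act on `ℂ` (the group `Γ` plays the role of `PSL₂(ℂ)`), let
`G₀ = ⟨t⟩ = G₁ ⊓ G₂` with `t` acting by `z ↦ z + 1`, and suppose every
`φ ∈ G_i \ G₀` maps `H = {|Im z| > 1}` into `Θ = {|Im z| ≤ 1}`.  Let `h` act by
`z ↦ z + μ` with `Im μ ≠ 0` and let `k` be such that `h^k (Θ) ⊆ H`.  Then
`Θ₁ = Θ` and `Θ₂ = h^k (Θ)` form a proper interactive pair for `G₁` and
`h^k G₂ h^{-k}`, and hence `G₁ *_{G₀} h^k G₂ h^{-k}` embeds into `Γ`. -/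
theorem klein_maskit_example
    {Γ : Type} [Group Γ] [MulAction Γ ℂ]
    (G₁ G₂ : Subgroup Γ) (t h : Γ)
    (ht : ∀ z : ℂ, t • z = z + 1)
    (hG₀ : Subgroup.zpowers t = G₁ ⊓ G₂)
    (μ : ℂ) (hμ : μ.im ≠ 0) (hh : ∀ z : ℂ, h • z = z + μ)
    (hmap₁ : ∀ g, g ∈ G₁ → g ∉ Subgroup.zpowers t →
      ∀ z : ℂ, 1 < |z.im| → |(g • z).im| ≤ 1)
    (hmap₂ : ∀ g, g ∈ G₂ → g ∉ Subgroup.zpowers t →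
      ∀ z : ℂ, 1 < |z.im| → |(g • z).im| ≤ 1)
    (hcomm : Commute h t)
    (k : ℕ) (hk : ∀ z : ℂ, |z.im| ≤ 1 → 1 < |((h ^ k) • z).im|) :
    -- the conjugated second factor and the two ping-pong sets
    (let G₀ : Subgroup Γ := Subgroup.zpowers t
     let G₂' : Subgroup Γ := Subgroup.map (MulAut.conj (h ^ k)).toMonoidHom G₂
     let Θ₁ : Set ℂ := {z : ℂ | |z.im| ≤ 1}
     let Θ₂ : Set ℂ := (h ^ k) • ({z : ℂ | |z.im| ≤ 1} : Set ℂ)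
     -- proper interactive pair
     (Θ₁.Nonempty ∧ Θ₂.Nonempty ∧ Θ₁ ∩ Θ₂ = ∅ ∧
      (∀ g ∈ G₀, ∀ x ∈ Θ₁, g • x ∈ Θ₁) ∧
      (∀ g ∈ G₀, ∀ x ∈ Θ₂, g • x ∈ Θ₂) ∧
      (∀ g, g ∈ G₁ → g ∉ G₀ → ∀ x ∈ Θ₂, g • x ∈ Θ₁) ∧
      (∀ g, g ∈ G₂' → g ∉ G₀ → ∀ x ∈ Θ₁, g • x ∈ Θ₂) ∧
      (∃ θ₁ ∈ Θ₁, ∀ g, g ∈ G₁ → g ∉ G₀ → ∀ x ∈ Θ₂, g • x ≠ θ₁) ∧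
      (∃ θ₂ ∈ Θ₂, ∀ g, g ∈ G₂' → g ∉ G₀ → ∀ x ∈ Θ₁, g • x ≠ θ₂)) ∧
     -- hence the amalgamated product embeds in Γ
     (∀ hle : ∀ b : Bool, G₀ ≤ (if b then G₁ else G₂'),
        Function.Injective
          (Monoid.PushoutI.lift (φ := fun b : Bool => Subgroup.inclusion (hle b))
            (fun b => (if b then G₁ else G₂' : Subgroup Γ).subtype) G₀.subtype
            (fun b => MonoidHom.ext fun x => rfl)))) :=
  klein_maskit_example_general G₁ G₂ t h ht μ hh hmap₁ hmap₂ hcomm k hk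
end
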